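/- Let p be a prime and let G = (Z/p^{a_1}Z) × ... × (Z/p^{a_n}Z), where a_1 ≥ a_2 ≥ ... ≥ a_n are positive integers. For j = 1, ..., a_1 let b_j = max{ i : a_i ≥ j }. Then 𝔰(G) ≤ Σ_{j=1}^{a_1} p^{j-1}·𝔰(F_p^{b_j}). -/

import Mathlib

/-- A finite set in an abelian group is free of three-term arithmetic progressions:
it contains no three distinct elements x, y, z with x + z = 2y.
(Note that x ≠ z and x + z = y + y automatically force x, y, z to be pairwise distinct.) -/
def APFree {G : Type*} [AddCommGroup G] (A : Finset G) : Prop :=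
  ∀ x ∈ A, ∀ y ∈ A, ∀ z ∈ A, x ≠ z → x + z ≠ y + y

/-- r(G): the largest size of a subset of G without a three-term arithmetic progression. -/
noncomputable def rAP (G : Type*) [AddCommGroup G] : ℕ :=
  sSup {k | ∃ A : Finset G, APFree A ∧ A.card = k}

/-- The Erdős–Ginzburg–Ziv constant 𝔰(G): the smallest positive integer s such that every
sequence (multiset) of s elements of G has a subsequence of length exp(G) summing to zero. -/
noncomputable def EGZ (G : Type*) [AddCommGroup G] : ℕ :=
  sInf {s | 0 < s ∧ ∀ m : Multiset G, Multiset.card m = s →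
    ∃ t ≤ m, Multiset.card t = AddMonoid.exponent G ∧ t.sum = 0}

/-- 𝔤(G): the smallest integer a such that every subset of G of size at least a contains
exp(G) distinct elements summing to zero. -/
noncomputable def gEGZ (G : Type*) [AddCommGroup G] : ℕ :=
  sInf {a | ∀ A : Finset G, a ≤ A.card →
    ∃ B ⊆ A, B.card = AddMonoid.exponent G ∧ ∑ x ∈ B, x = 0}

/-!
Blocks of level `t` are subsequences of `p ^ t` terms whose sum is `p ^ t • v`. The class of `v`
modulo the layer `p ^ t G / p ^ (t + 1) G ≅ 𝔽_p ^ b_(t+1)` decides whether the sum of `p` such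
blocks is again `p ^ (t + 1)` times something, so any `𝔰(𝔽_p ^ b_(t+1))` blocks of level `t`
contain `p` that merge into one block of level `t + 1`, and greedily `𝔰(𝔽_p ^ b_(t+1)) + p c` of
them yield `c` blocks of level `t + 1`. Starting from singletons, `∑ p ^ t 𝔰(𝔽_p ^ b_(t+1))` terms
produce a block of level `a_1`: a zero-sum subsequence of length `p ^ a_1 = exp G`.
-/

open Multiset AddMonoid

namespace Multiset

variable {α β : Type*}

lemma exists_le_card_eq {s : Multiset α} {k : ℕ} (h : k ≤ card s) : ∃ t ≤ s, card t = k := by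
  induction s using Quotient.inductionOn with
  | h l => exact ⟨l.take k, coe_le.mpr (List.take_sublist k l).subperm, by simpa using h⟩

lemma exists_le_map_eq {f : α → β} {s : Multiset α} {t : Multiset β} (h : t ≤ s.map f) :
    ∃ u ≤ s, u.map f = t := by
  induction s using Quotient.inductionOn with
  | h l =>
  induction t using Quotient.inductionOn with
  | h l' =>
  obtain ⟨l'', hperm, hsub⟩ := coe_le.mp h
  obtain ⟨u, hu, rfl⟩ := List.sublist_map_iff.mp hsub
  exact ⟨u, coe_le.mpr hu.subperm, coe_eq_coe.mpr hperm⟩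

lemma bind_le_bind_of_le {f : α → Multiset β} {s t : Multiset α} (h : s ≤ t) :
    s.bind f ≤ t.bind f := by
  obtain ⟨u, rfl⟩ := le_iff_exists_add.mp h
  rw [add_bind]
  exact le_add_right _ _

end Multiset

section EGZ

variable (K : Type*) [AddCommGroup K]

lemma EGZ_le_of_forall (hK : 0 < exponent K) (s : ℕ)
    (h : ∀ m : Multiset K, card m = s → ∃ t ≤ m, card t = exponent K ∧ t.sum = 0) :
    EGZ K ≤ s := by
  refine Nat.sInf_le ⟨Nat.pos_of_ne_zero fun hs => ?_, h⟩
  obtain ⟨t, ht, hcard, -⟩ := h 0 (by simp [hs])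
  rw [le_zero.mp ht, card_zero] at hcard
  exact hK.ne hcard

variable [Finite K]

lemma EGZ_mem :
    EGZ K ∈ {s | 0 < s ∧ ∀ m : Multiset K, card m = s →
      ∃ t ≤ m, card t = exponent K ∧ t.sum = 0} := by
  classical
  cases nonempty_fintype K
  have hexp : 0 < exponent K := ExponentExists.of_finite.exponent_pos
  -- pigeonhole: `exponent K * |K|` terms contain some element `exponent K` times
  refine Nat.sInf_mem ⟨exponent K * Fintype.card K, by positivity, fun m hm => ?_⟩
  obtain ⟨x, -, hx⟩ : ∃ x ∈ Finset.univ, exponent K ≤ m.count x := by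
    refine Finset.exists_le_of_sum_le Finset.univ_nonempty ?_
    rw [sum_count_eq_card (fun _ _ => Finset.mem_univ _), hm, Finset.sum_const,
      Finset.card_univ, smul_eq_mul, mul_comm]
  exact ⟨replicate (exponent K) x, le_count_iff_replicate_le.mp hx, card_replicate _ _,
    by rw [sum_replicate, exponent_nsmul_eq_zero]⟩

lemma exists_le_card_eq_exponent_sum_map_eq_zero {α : Type*} (f : α → K) {M : Multiset α}
    (hM : EGZ K ≤ card M) : ∃ M₀ ≤ M, card M₀ = exponent K ∧ (M₀.map f).sum = 0 := by
  obtain ⟨M₁, hM₁, hcard⟩ := exists_le_card_eq hM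
  obtain ⟨t, ht, htcard, htsum⟩ := (EGZ_mem K).2 (M₁.map f) (by rw [card_map, hcard])
  obtain ⟨M₀, hM₀, rfl⟩ := exists_le_map_eq ht
  exact ⟨M₀, hM₀.trans hM₁, by rwa [card_map] at htcard, htsum⟩

end EGZ

section Blocks

variable {G : Type*} [AddCommGroup G] (p : ℕ)

/-- `q.2` is a chosen quotient of the sum by `p ^ t`; it is carried along because it need not be
unique. -/
def IsBlock (t : ℕ) (q : Multiset G × G) : Prop :=
  card q.1 = p ^ t ∧ q.1.sum = p ^ t • q.2

variable {p} {K : Type*} [AddCommGroup K] [Finite K] {t : ℕ} {ψ : G →+ K}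

lemma exists_isBlock_succ (hK : exponent K = p)
    (hψ : ∀ v, ψ v = 0 → ∃ z, p ^ t • v = p ^ (t + 1) • z)
    {M : Multiset (Multiset G × G)} (hM : ∀ q ∈ M, IsBlock p t q) (hc : EGZ K ≤ card M) :
    ∃ M₀ ≤ M, card M₀ = p ∧ ∃ z, IsBlock p (t + 1) (M₀.bind Prod.fst, z) := by
  obtain ⟨M₀, hM₀, hcard, hsum⟩ :=
    exists_le_card_eq_exponent_sum_map_eq_zero K (fun q => ψ q.2) hc
  obtain ⟨z, hz⟩ := hψ (M₀.map Prod.snd).sum (by rwa [map_multiset_sum, map_map])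
  have hblock : ∀ q ∈ M₀, IsBlock p t q := fun q hq => hM q (mem_of_le hM₀ hq)
  have hcards : M₀.map (card ∘ Prod.fst) = M₀.map fun _ => p ^ t :=
    map_congr rfl fun q hq => (hblock q hq).1
  have hsums : M₀.map (fun q => q.1.sum) = M₀.map fun q => p ^ t • q.2 :=
    map_congr rfl fun q hq => (hblock q hq).2
  refine ⟨M₀, hM₀, hK ▸ hcard, z, ?_, ?_⟩
  · rw [card_bind, hcards, Multiset.map_const', Multiset.sum_replicate, hcard, hK, smul_eq_mul,
      pow_succ']
  · rw [sum_bind, hsums, ← hz, Multiset.smul_sum, map_map]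
    rfl

lemma exists_isBlock_succ_card_eq (hK : exponent K = p)
    (hψ : ∀ v, ψ v = 0 → ∃ z, p ^ t • v = p ^ (t + 1) • z) (c : ℕ)
    {M : Multiset (Multiset G × G)} (hM : ∀ q ∈ M, IsBlock p t q) (hc : EGZ K + p * c ≤ card M) :
    ∃ M' : Multiset (Multiset G × G), card M' = c ∧ (∀ q ∈ M', IsBlock p (t + 1) q) ∧
      M'.bind Prod.fst ≤ M.bind Prod.fst := by
  induction c generalizing M with
  | zero => exact ⟨0, rfl, by simp, by simp⟩
  | succ c ih =>
    obtain ⟨M₀, hM₀, hcard, z, hz⟩ := exists_isBlock_succ hK hψ hM (by omega)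
    obtain ⟨R, rfl⟩ := Multiset.le_iff_exists_add.mp hM₀
    obtain ⟨M', hcard', hM', hle⟩ := ih (fun q hq => hM q (mem_add.mpr (Or.inr hq)))
      (by rw [card_add, hcard, mul_add] at hc; omega)
    refine ⟨(M₀.bind Prod.fst, z) ::ₘ M', by simp [hcard'], ?_, ?_⟩
    · exact forall_mem_cons.mpr ⟨hz, hM'⟩
    · rw [cons_bind, add_bind]
      exact add_le_add_right hle _

end Blocks

section Levels

variable {G : Type*} [AddCommGroup G] {p e : ℕ} {K : ℕ → Type*} [∀ t, AddCommGroup (K t)]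
  [∀ t, Finite (K t)] {ψ : ∀ t, G →+ K t}

lemma exists_isBlock_of_sum_le (hK : ∀ t < e, exponent (K t) = p)
    (hψ : ∀ t < e, ∀ v, ψ t v = 0 → ∃ z, p ^ t • v = p ^ (t + 1) • z) (d t : ℕ) (ht : t + d < e)
    {M : Multiset (Multiset G × G)} (hM : ∀ q ∈ M, IsBlock p t q)
    (hc : ∑ k ∈ Finset.range (d + 1), p ^ k * EGZ (K (t + k)) ≤ card M) :
    ∃ q, IsBlock p (t + d + 1) q ∧ q.1 ≤ M.bind Prod.fst := by
  induction d generalizing t M with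
  | zero =>
    obtain ⟨M₀, hM₀, -, z, hz⟩ := exists_isBlock_succ (hK t (by omega)) (hψ t (by omega)) hM
      (by simpa using hc)
    exact ⟨_, hz, bind_le_bind_of_le hM₀⟩
  | succ d ih =>
    have hsplit : ∑ k ∈ Finset.range (d + 2), p ^ k * EGZ (K (t + k)) =
        EGZ (K t) + p * ∑ k ∈ Finset.range (d + 1), p ^ k * EGZ (K (t + 1 + k)) := by
      rw [Finset.sum_range_succ', Finset.mul_sum, add_comm, pow_zero, one_mul, Nat.add_zero]
      refine congrArg _ (Finset.sum_congr rfl fun k _ => ?_)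
      rw [pow_succ', mul_assoc, add_comm k 1, add_assoc]
    obtain ⟨M', hcard, hM', hle⟩ := exists_isBlock_succ_card_eq (hK t (by omega))
      (hψ t (by omega)) _ hM (hsplit ▸ hc)
    obtain ⟨q, hq, hqle⟩ := ih (t + 1) (by omega) hM' hcard.ge
    exact ⟨q, by rwa [add_right_comm t], hqle.trans hle⟩

theorem EGZ_le_sum_pow_mul_EGZ (hG : exponent G = p ^ e) (he : 0 < e)
    (hK : ∀ t < e, exponent (K t) = p)
    (hψ : ∀ t < e, ∀ v, ψ t v = 0 → ∃ z, p ^ t • v = p ^ (t + 1) • z) :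
    EGZ G ≤ ∑ t ∈ Finset.range e, p ^ t * EGZ (K t) := by
  have hp : 0 < p := hK 0 he ▸ ExponentExists.of_finite.exponent_pos
  refine EGZ_le_of_forall G (hG ▸ pow_pos hp e) _ fun m hm => ?_
  have hlevel : 0 + (e - 1) + 1 = e := by omega
  obtain ⟨q, hq, hle⟩ := exists_isBlock_of_sum_le hK hψ (e - 1) 0 (by omega)
    (M := m.map fun x => ({x}, x)) (by simp [IsBlock])
    (by
      rw [card_map, hm, Nat.sub_add_cancel he]
      exact (Finset.sum_congr rfl fun k _ => by rw [zero_add]).le)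
  rw [hlevel] at hq
  refine ⟨q.1, by rwa [bind_map, bind_singleton, map_id'] at hle, by rw [hq.1, hG], ?_⟩
  rw [hq.2, ← hG, exponent_nsmul_eq_zero]

end Levels

lemma exponent_pi_zmod {ι : Type*} (n : ι → ℕ) (i₀ : ι) (h : ∀ i, n i ∣ n i₀) :
    exponent (∀ i, ZMod (n i)) = n i₀ := by
  refine Nat.dvd_antisymm (exponent_dvd_of_forall_nsmul_eq_zero fun x => funext fun i => ?_) ?_
  · rw [Pi.smul_apply, nsmul_eq_mul, (ZMod.natCast_eq_zero_iff _ _).mpr (h i), zero_mul,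
      Pi.zero_apply]
  · simpa using AddMonoidHom.exponent_dvd (f := Pi.evalAddMonoidHom (fun i => ZMod (n i)) i₀)
      (Function.surjective_eval i₀)

lemma ZMod.exists_eq_nsmul_of_castHom_eq_zero {m n : ℕ} [NeZero m] (hnm : n ∣ m) {x : ZMod m}
    (hx : ZMod.castHom hnm (ZMod n) x = 0) : ∃ w : ZMod m, x = n • w := by
  rw [ZMod.castHom_apply, ← ZMod.natCast_val, ZMod.natCast_eq_zero_iff] at hx
  obtain ⟨c, hc⟩ := hx
  exact ⟨c, by rw [nsmul_eq_mul, ← Nat.cast_mul, ← hc, ZMod.natCast_zmod_val]⟩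

section LayerMap

variable {ι : Type*} [Fintype ι] (p : ℕ) (a : ι → ℕ)

/-- Reduction mod `p` of the coordinates `i` with `t < a i`, i.e. of those on which
`p ^ t • ∀ i, ZMod (p ^ a i)` is nonzero. -/
noncomputable def layerMap (t : ℕ) :
    (∀ i, ZMod (p ^ a i)) →+ (Fin (Finset.univ.filter fun i => t + 1 ≤ a i).card → ZMod p) :=
  AddMonoidHom.pi fun k =>
    let i := (Finset.univ.filter fun i => t + 1 ≤ a i).equivFin.symm k
    (ZMod.castHom (dvd_pow_self p (Nat.ne_zero_of_lt (Finset.mem_filter.mp i.2).2))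
      (ZMod p)).toAddMonoidHom.comp (Pi.evalAddMonoidHom (fun i => ZMod (p ^ a i)) i)

lemma layerMap_eq_zero [NeZero p] {t : ℕ} {v : ∀ i, ZMod (p ^ a i)} (hv : layerMap p a t v = 0) :
    ∃ z, p ^ t • v = p ^ (t + 1) • z := by
  have key : ∀ i, ∃ w : ZMod (p ^ a i), p ^ t • v i = p ^ (t + 1) • w := by
    intro i
    by_cases hi : t + 1 ≤ a i
    · obtain ⟨k, rfl⟩ : ∃ k, ((Finset.univ.filter fun i => t + 1 ≤ a i).equivFin.symm k).1 = i :=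
        ⟨_, congrArg Subtype.val (Equiv.symm_apply_apply _ ⟨i, by simpa using hi⟩)⟩
      obtain ⟨w, hw⟩ := ZMod.exists_eq_nsmul_of_castHom_eq_zero
        (dvd_pow_self p (by omega)) (congrFun hv k)
      exact ⟨w, by rw [Pi.evalAddMonoidHom_apply] at hw; rw [hw, smul_smul, ← pow_succ]⟩
    · refine ⟨0, ?_⟩
      rw [smul_zero, nsmul_eq_mul, (ZMod.natCast_eq_zero_iff _ _).mpr (pow_dvd_pow p (by omega)),
        zero_mul]
  choose z hz using key
  exact ⟨z, funext hz⟩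

end LayerMap

/-- **Remark.** Let p be a prime and G = (ℤ/p^{a_1}ℤ) × ... × (ℤ/p^{a_n}ℤ) where
a_1 ≥ a_2 ≥ ... ≥ a_n are positive integers. For j = 1, ..., a_1 let b_j be the number of
indices i with a_i ≥ j (which, since a is sorted decreasingly, is the largest index i with
a_i ≥ j). Then 𝔰(G) ≤ ∑_{j=1}^{a_1} p^{j-1}·𝔰(F_p^{b_j}). -/
theorem stmt10 (p : ℕ) (hp : p.Prime) (n : ℕ) (hn : 0 < n) (a : Fin n → ℕ)
    (ha : ∀ i, 0 < a i) (hmono : Antitone a) :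
    EGZ (∀ i, ZMod (p ^ a i)) ≤
      ∑ j ∈ Finset.Icc 1 (a ⟨0, hn⟩),
        p ^ (j - 1) * EGZ (Fin ((Finset.univ.filter fun i => j ≤ a i).card) → ZMod p) := by
  have : NeZero p := ⟨hp.ne_zero⟩
  have hexp : exponent (∀ i, ZMod (p ^ a i)) = p ^ a ⟨0, hn⟩ :=
    exponent_pi_zmod (fun i => p ^ a i) _ fun i => pow_dvd_pow p (hmono (Nat.zero_le i.1))
  have hlayer : ∀ t < a ⟨0, hn⟩,
      exponent (Fin (Finset.univ.filter fun i => t + 1 ≤ a i).card → ZMod p) = p := fun t ht =>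
    exponent_pi_zmod (fun _ => p) ⟨0, Finset.card_pos.mpr ⟨⟨0, hn⟩, by simpa using ht⟩⟩
      fun _ => dvd_rfl
  calc EGZ (∀ i, ZMod (p ^ a i))
      ≤ ∑ t ∈ Finset.range (a ⟨0, hn⟩),
          p ^ t * EGZ (Fin (Finset.univ.filter fun i => t + 1 ≤ a i).card → ZMod p) :=
        EGZ_le_sum_pow_mul_EGZ hexp (ha _) hlayer fun t _ _ => layerMap_eq_zero p a
    _ = _ := by
      rw [Finset.range_eq_Ico, ← Finset.Ico_add_one_right_eq_Icc]
      exact Finset.sum_Ico_add' (fun j =>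
        p ^ (j - 1) * EGZ (Fin ((Finset.univ.filter fun i => j ≤ a i).card) → ZMod p)) 0 _ 1
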